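/- arXiv:math/9911131 — 5 statements merged into one kernel-verified Lean document; each statement's English description precedes it below -/
import Mathlib

section
/- For every natural number m and all complex numbers z and w with z·w ≠ 1, the m-th iterated derivative of the function g(w) = w^m·(1 − z·w)⁻¹ satisfies iteratedDeriv m g w = m! · (1 − z·w)^{-(m+1)}. -/
open Polynomial Filter

lemma iteratedDeriv_polyEval (p : ℂ[X]) (n : ℕ) :
    iteratedDeriv n (fun x : ℂ => p.eval x) = fun x => (derivative^[n] p).eval x := by
  induction n generalizing p with
  | zero => simp [iteratedDeriv_zero]
  | succ n ih =>
      rw [iteratedDeriv_succ']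
      have : deriv (fun x : ℂ => p.eval x) = fun x => (derivative p).eval x := by
        ext x; exact p.deriv
      rw [this, ih, Function.iterate_succ_apply]

lemma iteratedDeriv_const_mul_inv_one_sub_add_poly (z c : ℂ) (p : ℂ[X]) (n : ℕ) :
    ∀ w : ℂ, z * w ≠ 1 →
      iteratedDeriv n (fun w : ℂ => c * (1 - z * w)⁻¹ + p.eval w) w
        = c * n.factorial * z ^ n * (1 - z * w) ^ (-(n : ℤ) - 1)
          + (derivative^[n] p).eval w := by
  induction n with
  | zero =>
      intro w hw
      simp [iteratedDeriv_zero]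
  | succ n ih =>
      intro w hw
      have hopen : IsOpen {w : ℂ | z * w ≠ 1} :=
        isOpen_ne.preimage (by continuity)
      have hev : iteratedDeriv n (fun w : ℂ => c * (1 - z * w)⁻¹ + p.eval w)
          =ᶠ[nhds w] fun w => c * n.factorial * z ^ n * (1 - z * w) ^ (-(n : ℤ) - 1)
            + (derivative^[n] p).eval w := by
        filter_upwards [hopen.mem_nhds hw] with x hx using ih x hx
      rw [iteratedDeriv_succ, hev.deriv_eq]
      have hne : 1 - z * w ≠ 0 := sub_ne_zero.2 (Ne.symm hw)
      have h1 : HasDerivAt (fun w : ℂ => 1 - z * w) (-z) w := by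
        simpa using ((hasDerivAt_id w).const_mul z).const_sub 1
      have h2 : HasDerivAt (fun w : ℂ => (1 - z * w) ^ (-(n : ℤ) - 1))
          (((-(n : ℤ) - 1) : ℂ) * (1 - z * w) ^ (-(n : ℤ) - 1 - 1) * (-z)) w := by
        have := (hasDerivAt_zpow (-(n : ℤ) - 1) (1 - z * w) (Or.inl hne)).comp w h1
        exact this.congr_deriv (by push_cast; ring)
      have h3 : HasDerivAt (fun w : ℂ => c * n.factorial * z ^ n * (1 - z * w) ^ (-(n : ℤ) - 1)
            + (derivative^[n] p).eval w)
          (c * n.factorial * z ^ n *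
              (((-(n : ℤ) - 1) : ℂ) * (1 - z * w) ^ (-(n : ℤ) - 1 - 1) * (-z))
            + ((derivative^[n] p).derivative).eval w) w :=
        (h2.const_mul _).add ((derivative^[n] p).hasDerivAt w)
      rw [h3.deriv, Function.iterate_succ_apply']
      have e1 : (-(n : ℤ) - 1 - 1) = (-((n : ℕ) + 1 : ℕ) - 1 : ℤ) := by push_cast; ring
      rw [e1]
      push_cast [Nat.factorial_succ]
      ring

/-- For every natural number `m` and all complex `z, w` with `z·w ≠ 1`, the `m`-th
iterated complex derivative of `g(w) = w^m·(1 − z·w)⁻¹` is `m!·(1 − z·w)^{-(m+1)}`. -/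
theorem iteratedDeriv_pow_mul_inv_one_sub (m : ℕ) (z w : ℂ) (h : z * w ≠ 1) :
    iteratedDeriv m (fun w : ℂ => w ^ m * (1 - z * w)⁻¹) w
      = (m.factorial : ℂ) * (1 - z * w) ^ (-((m : ℤ) + 1)) := by
  rcases eq_or_ne z 0 with rfl | hz
  · have : (fun w : ℂ => w ^ m * (1 - 0 * w)⁻¹) = fun w : ℂ => (X ^ m : ℂ[X]).eval w := by
      ext x; simp
    rw [this, iteratedDeriv_polyEval]
    simp [Polynomial.iterate_derivative_X_pow_eq_smul, Nat.descFactorial_self]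
  · set p : ℂ[X] := -(∑ j ∈ Finset.range m, C (z ^ j * (z ^ m)⁻¹) * X ^ j) with hp
    have hzm : z ^ m ≠ 0 := pow_ne_zero _ hz
    have hopen : IsOpen {w : ℂ | z * w ≠ 1} := isOpen_ne.preimage (by continuity)
    have key : ∀ x : ℂ, z * x ≠ 1 →
        x ^ m * (1 - z * x)⁻¹ = (z ^ m)⁻¹ * (1 - z * x)⁻¹ + p.eval x := by
      intro x hx
      have hne : (1 : ℂ) - z * x ≠ 0 := sub_ne_zero.2 (Ne.symm hx)
      have hg := geom_sum_mul (z * x) m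
      have hS : ∑ j ∈ Finset.range m, z ^ j * (z ^ m)⁻¹ * x ^ j
          = (z ^ m)⁻¹ * ∑ j ∈ Finset.range m, (z * x) ^ j := by
        rw [Finset.mul_sum]
        exact Finset.sum_congr rfl fun j _ => by rw [mul_pow]; ring
      simp only [hp, Polynomial.eval_neg, Polynomial.eval_finset_sum, Polynomial.eval_mul,
        Polynomial.eval_C, Polynomial.eval_pow, Polynomial.eval_X, hS]
      rw [mul_pow] at hg
      linear_combination (-((z ^ m)⁻¹ * (1 - z * x)⁻¹)) * hg - x ^ m * (1 - z * x)⁻¹ * mul_inv_cancel₀ hzm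
        - (z ^ m)⁻¹ * (∑ j ∈ Finset.range m, (z * x) ^ j) * mul_inv_cancel₀ hne
    have hev : (fun w : ℂ => w ^ m * (1 - z * w)⁻¹)
        =ᶠ[nhds w] fun x => (z ^ m)⁻¹ * (1 - z * x)⁻¹ + p.eval x := by
      filter_upwards [hopen.mem_nhds h] with x hx using key x hx
    rw [hev.iteratedDeriv_eq,
      iteratedDeriv_const_mul_inv_one_sub_add_poly z ((z ^ m)⁻¹) p m w h]
    have hder : derivative^[m] p = 0 := by
      rcases Nat.eq_zero_or_pos m with rfl | hm
      · simp [hp]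
      · apply Polynomial.iterate_derivative_eq_zero
        rw [hp, natDegree_neg]
        calc (∑ j ∈ Finset.range m, C (z ^ j * (z ^ m)⁻¹) * X ^ j).natDegree
            ≤ m - 1 := natDegree_sum_le_of_forall_le _ _ fun j hj =>
              (natDegree_C_mul_X_pow_le _ _).trans (Nat.le_sub_one_of_lt (Finset.mem_range.1 hj))
          _ < m := Nat.sub_lt hm one_pos
    rw [hder]
    have : (-((m : ℤ) + 1)) = (-(m : ℤ) - 1) := by ring
    rw [this]
    have hne : (1 : ℂ) - z * w ≠ 0 := sub_ne_zero.2 (Ne.symm h)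
    simp
    left
    rw [mul_comm, ← mul_assoc, mul_inv_cancel₀ hzm, one_mul]
end

section
/- Let m be a natural number and let q(z) = conj(z)/(1 − |z|²). Then for every z in the open unit disk D, the m-fold iterate of the invariant Cauchy–Riemann operator applied to the function q^m satisfies D̄^{∘m}(q^m)(z) = m!. -/
open Complex

/-- The Wirtinger derivative `∂̄f(z) = (1/2)(L(1) + i·L(i))`, `L = fderiv ℝ f z`. -/
noncomputable def wirtingerBar (f : ℂ → ℂ) (z : ℂ) : ℂ :=
  (1 / 2) * ((fderiv ℝ f z) 1 + Complex.I * (fderiv ℝ f z) Complex.I)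

/-- The invariant Cauchy–Riemann operator of the unit disk: `(D̄f)(z) = (1−|z|²)²·∂̄f(z)`. -/
noncomputable def invCR : (ℂ → ℂ) → (ℂ → ℂ) :=
  fun f z => ((1 - ‖z‖ ^ 2 : ℝ) : ℂ) ^ 2 * wirtingerBar f z

noncomputable def qq (w : ℂ) : ℂ := (starRingEnd ℂ) w / (1 - w * (starRingEnd ℂ) w)

lemma qq_eq (w : ℂ) :
    ((starRingEnd ℂ) w / ((1 - ‖w‖ ^ 2 : ℝ) : ℂ)) = qq w := by
  simp [qq, Complex.mul_conj, Complex.normSq_eq_norm_sq]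

noncomputable def Bmap (z : ℂ) : ℂ →L[ℝ] ℂ :=
  (starRingEnd ℂ) z •
    ((-(ContinuousLinearMap.mulLeftRight ℝ ℂ (1 - z * (starRingEnd ℂ) z)⁻¹
        (1 - z * (starRingEnd ℂ) z)⁻¹)).comp
      ((0 : ℂ →L[ℝ] ℂ) -
        (z • Complex.conjCLE.toContinuousLinearMap +
          (starRingEnd ℂ) z • ContinuousLinearMap.id ℝ ℂ))) +
  (1 - z * (starRingEnd ℂ) z)⁻¹ • Complex.conjCLE.toContinuousLinearMap

lemma hasFDerivAt_qq {z : ℂ} (hd : 1 - z * (starRingEnd ℂ) z ≠ 0) :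
    HasFDerivAt qq (Bmap z) z := by
  have hconj : HasFDerivAt (fun w : ℂ => (starRingEnd ℂ) w)
      (Complex.conjCLE.toContinuousLinearMap) z :=
    Complex.conjCLE.toContinuousLinearMap.hasFDerivAt
  have hmul : HasFDerivAt (fun w : ℂ => w * (starRingEnd ℂ) w)
      (z • Complex.conjCLE.toContinuousLinearMap + (starRingEnd ℂ) z • ContinuousLinearMap.id ℝ ℂ) z := by
    exact (hasFDerivAt_id z).mul hconj
  have hn : HasFDerivAt (fun w : ℂ => 1 - w * (starRingEnd ℂ) w)
      ((0 : ℂ →L[ℝ] ℂ) - (z • Complex.conjCLE.toContinuousLinearMap +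
        (starRingEnd ℂ) z • ContinuousLinearMap.id ℝ ℂ)) z :=
    (hasFDerivAt_const (1:ℂ) z).sub hmul
  have hinv : HasFDerivAt (fun w : ℂ => (1 - w * (starRingEnd ℂ) w)⁻¹)
      ((-(ContinuousLinearMap.mulLeftRight ℝ ℂ (1 - z * (starRingEnd ℂ) z)⁻¹
        (1 - z * (starRingEnd ℂ) z)⁻¹)).comp
        ((0 : ℂ →L[ℝ] ℂ) - (z • Complex.conjCLE.toContinuousLinearMap +
          (starRingEnd ℂ) z • ContinuousLinearMap.id ℝ ℂ))) z :=
    (hasFDerivAt_inv' hd).comp z hn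
  have := hconj.mul hinv
  rw [show qq = fun w => (starRingEnd ℂ) w * (1 - w * (starRingEnd ℂ) w)⁻¹ from
    funext fun w => div_eq_mul_inv _ _]
  simpa [qq, Bmap, div_eq_mul_inv, Pi.mul_def] using this

lemma hasFDerivAt_qq_pow {z : ℂ} (hd : 1 - z * (starRingEnd ℂ) z ≠ 0) (j : ℕ) :
    HasFDerivAt (fun w : ℂ => qq w ^ j) (((j : ℂ) * qq z ^ (j - 1)) • Bmap z) z := by
  induction j with
  | zero =>
      have h0 : (((0:ℕ) : ℂ) * qq z ^ (0 - 1)) • Bmap z = (0 : ℂ →L[ℝ] ℂ) := by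
        rw [Nat.cast_zero, zero_mul]; exact zero_smul ℂ (Bmap z)
      rw [h0]
      have : (fun w : ℂ => qq w ^ 0) = fun _ : ℂ => (1:ℂ) := by funext w; simp
      rw [this]
      exact hasFDerivAt_const (1:ℂ) z
  | succ j ih =>
      have h := ih.mul (hasFDerivAt_qq hd)
      have : ((fun w : ℂ => qq w ^ j) * qq) = fun w : ℂ => qq w ^ (j+1) := by
        funext w; rw [Pi.mul_apply, ← pow_succ]
      rw [this] at h
      refine h.congr_fderiv ?_
      rw [smul_smul, ← add_smul]
      congr 1
      cases j with
      | zero => simp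
      | succ n =>
          push_cast
          have : qq z ^ (n + 1) = qq z * qq z ^ n := by rw [pow_succ]; ring
          simp only [Nat.add_sub_cancel, this]
          ring

lemma wirtinger_combo {z : ℂ} (hd : 1 - z * (starRingEnd ℂ) z ≠ 0) :
    (1 / 2 : ℂ) * (Bmap z 1 + Complex.I * Bmap z Complex.I)
      = ((1 - z * (starRingEnd ℂ) z) ^ 2)⁻¹ := by
  simp only [Bmap, ContinuousLinearMap.add_apply, ContinuousLinearMap.smul_apply,
    ContinuousLinearMap.comp_apply, ContinuousLinearMap.sub_apply,
    ContinuousLinearMap.zero_apply, ContinuousLinearMap.neg_apply,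
    ContinuousLinearMap.mulLeftRight_apply, ContinuousLinearMap.id_apply,
    ContinuousLinearEquiv.coe_coe, Complex.conjCLE_apply, map_one, Complex.conj_I,
    smul_eq_mul]
  field_simp
  ring_nf
  simp only [Complex.I_sq]
  ring

lemma dnorm (w : ℂ) : ((1 - ‖w‖ ^ 2 : ℝ) : ℂ) = 1 - w * (starRingEnd ℂ) w := by
  push_cast
  simp [Complex.mul_conj, Complex.normSq_eq_norm_sq]

lemma invCR_const_mul_qq_pow (c : ℂ) (j : ℕ) {z : ℂ} (hz1 : ‖z‖ < 1) :
    invCR (fun w => c * qq w ^ j) z = c * (j : ℂ) * qq z ^ (j - 1) := by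
  have hd : 1 - z * (starRingEnd ℂ) z ≠ 0 := by
    rw [← dnorm]
    intro h
    have : (1 - ‖z‖ ^ 2 : ℝ) = 0 := by exact_mod_cast h
    nlinarith [norm_nonneg z]
  have h : HasFDerivAt (fun w => c * qq w ^ j)
      (c • (((j : ℂ) * qq z ^ (j - 1)) • Bmap z)) z :=
    (hasFDerivAt_qq_pow hd j).const_mul c
  have hc := wirtinger_combo hd
  rw [invCR, wirtingerBar, h.fderiv]
  simp only [ContinuousLinearMap.smul_apply, smul_eq_mul]
  rw [dnorm]
  set d := 1 - z * (starRingEnd ℂ) z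
  set k := (j : ℂ) * qq z ^ (j - 1)
  calc d ^ 2 * (1 / 2 * (c * (k * Bmap z 1) + Complex.I * (c * (k * Bmap z Complex.I))))
      = (c * k) * (d ^ 2 * (1 / 2 * (Bmap z 1 + Complex.I * Bmap z Complex.I))) := by ring
    _ = (c * k) * (d ^ 2 * (d ^ 2)⁻¹) := by rw [hc]
    _ = c * k := by rw [mul_inv_cancel₀ (pow_ne_zero 2 hd), mul_one]
    _ = c * (j : ℂ) * qq z ^ (j - 1) := by rw [mul_assoc]

lemma iter_key (m : ℕ) : ∀ k, k ≤ m → ∀ z ∈ Metric.ball (0 : ℂ) 1,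
    invCR^[k] (fun w => qq w ^ m) z = (m.descFactorial k : ℂ) * qq z ^ (m - k) := by
  intro k
  induction k with
  | zero => intro _ z _; simp
  | succ k ih =>
      intro hk z hz
      have hk' : k ≤ m := le_of_lt (Nat.lt_of_succ_le hk)
      have hz1 : ‖z‖ < 1 := by simpa using mem_ball_zero_iff.mp hz
      rw [Function.iterate_succ_apply']
      have heq : invCR^[k] (fun w => qq w ^ m)
          =ᶠ[nhds z] fun w => (m.descFactorial k : ℂ) * qq w ^ (m - k) :=
        Filter.eventuallyEq_of_mem (Metric.isOpen_ball.mem_nhds hz) (ih hk')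
      have h1 : invCR (invCR^[k] (fun w => qq w ^ m)) z
          = invCR (fun w => (m.descFactorial k : ℂ) * qq w ^ (m - k)) z := by
        simp only [invCR, wirtingerBar, heq.fderiv_eq]
      rw [h1, invCR_const_mul_qq_pow _ _ hz1]
      rw [Nat.sub_sub, Nat.descFactorial_succ, Nat.cast_mul, Nat.cast_sub hk']
      ring

/-- With `q(z) = conj(z)/(1−|z|²)`, for every `z` in the open unit disk one has
`D̄^{∘m}(q^m)(z) = m!`. -/
theorem invCR_iterate_pow_quasiInverse (m : ℕ) (z : ℂ) (hz : z ∈ Metric.ball (0 : ℂ) 1) :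
    invCR^[m] (fun w : ℂ => ((starRingEnd ℂ) w / ((1 - ‖w‖ ^ 2 : ℝ) : ℂ)) ^ m) z
      = (m.factorial : ℂ) := by
  have hfun : (fun w : ℂ => ((starRingEnd ℂ) w / ((1 - ‖w‖ ^ 2 : ℝ) : ℂ)) ^ m)
      = fun w => qq w ^ m := by
    funext w; rw [qq_eq]
  rw [hfun, iter_key m m le_rfl z hz]
  simp [Nat.descFactorial_self]
end

section
/- Let ν be an integer, let a, b ∈ ℂ with |a|² − |b|² = 1, and set φ(z) = (a·z + b)/(conj(b)·z + conj(a)). Let f : ℂ → ℂ be smooth (C^∞ over ℝ) on the open unit disk D. Then for every z ∈ D, D̄[w ↦ f(φ(w))·(conj(b)·w + conj(a))^{−ν}](z) = (conj(b)·z + conj(a))^{−(ν−2)}·(D̄f)(φ(z)). (Note that conj(b)·w + conj(a) ≠ 0 for w ∈ D and that φ maps D biholomorphically onto D.) -/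
open Complex

lemma wb_comp (f φ : ℂ → ℂ) (z c' : ℂ) (hφ : HasDerivAt φ c' z)
    (hf : DifferentiableAt ℝ f (φ z)) :
    wirtingerBar (fun w => f (φ w)) z = (starRingEnd ℂ) c' * wirtingerBar f (φ z) := by
  have hφR : HasFDerivAt φ (((1 : ℂ →L[ℂ] ℂ).smulRight c').restrictScalars ℝ) z :=
    hφ.hasFDerivAt.restrictScalars ℝ
  have hcomp := (hf.hasFDerivAt.comp z hφR).fderiv
  rw [Function.comp_def] at hcomp
  set L := fderiv ℝ f (φ z) with hL
  have e1 : fderiv ℝ (fun w => f (φ w)) z 1 = L c' := by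
    rw [hcomp]; simp
  have e2 : fderiv ℝ (fun w => f (φ w)) z Complex.I = L (Complex.I * c') := by
    rw [hcomp]; simp [smul_eq_mul]
  have dec : ∀ u : ℂ, L u = (u.re : ℂ) * L 1 + (u.im : ℂ) * L Complex.I := by
    intro u
    calc L u = L ((u.re : ℝ) • (1:ℂ) + (u.im : ℝ) • Complex.I) := by
          congr 1
          simp [Complex.real_smul, Complex.re_add_im]
      _ = (u.re : ℂ) * L 1 + (u.im : ℂ) * L Complex.I := by
          rw [map_add, map_smul, map_smul]; simp [Complex.real_smul]
  rw [wirtingerBar, wirtingerBar, e1, e2, dec c', dec (Complex.I * c')]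
  have hcc : (starRingEnd ℂ) c' = (c'.re : ℂ) - (c'.im : ℂ) * Complex.I := by
    simp [Complex.ext_iff]
  rw [hcc]
  simp only [Complex.mul_re, Complex.mul_im, Complex.I_re, Complex.I_im]
  push_cast
  linear_combination ((c'.im : ℂ) * L Complex.I / 2) * Complex.I_sq

lemma wb_holo {h : ℂ → ℂ} {z h' : ℂ} (hh : HasDerivAt h h' z) : wirtingerBar h z = 0 := by
  have : fderiv ℝ h z = ((1 : ℂ →L[ℂ] ℂ).smulRight h').restrictScalars ℝ :=
    (hh.hasFDerivAt.restrictScalars ℝ).fderiv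
  rw [wirtingerBar, this]
  simp [smul_eq_mul]
  linear_combination h' * Complex.I_sq

lemma wb_mul (u h : ℂ → ℂ) (z h' : ℂ) (hu : DifferentiableAt ℝ u z)
    (hh : HasDerivAt h h' z) :
    wirtingerBar (fun w => u w * h w) z = h z * wirtingerBar u z := by
  have h0 : wirtingerBar h z = 0 := wb_holo hh
  have hhd : DifferentiableAt ℝ h z := (hh.differentiableAt).restrictScalars ℝ
  rw [wirtingerBar] at h0 ⊢
  rw [fderiv_fun_mul hu hhd]
  rw [wirtingerBar]
  simp only [ContinuousLinearMap.add_apply, ContinuousLinearMap.smul_apply, smul_eq_mul]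
  linear_combination u z * h0


/-- `D̄` intertwines the `SU(1,1)`-action `π_ν` with `π_{ν−2}` on the unit disk:
for `|a|²−|b|²=1`, `φ(z) = (az+b)/(b̄z+ā)` and `f` smooth on the disk,
`D̄[w ↦ f(φ(w))·(b̄w+ā)^{−ν}](z) = (b̄z+ā)^{−(ν−2)}·(D̄f)(φ(z))`. -/
theorem invCR_intertwines_projective_action (ν : ℤ) (a b : ℂ)
    (hab : Complex.normSq a - Complex.normSq b = 1) (f : ℂ → ℂ)
    (hf : ContDiffOn ℝ (⊤ : ℕ∞) f (Metric.ball (0 : ℂ) 1)) (z : ℂ)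
    (hz : z ∈ Metric.ball (0 : ℂ) 1) :
    invCR (fun w : ℂ =>
        f ((a * w + b) / ((starRingEnd ℂ) b * w + (starRingEnd ℂ) a))
          * ((starRingEnd ℂ) b * w + (starRingEnd ℂ) a) ^ (-ν)) z
      = ((starRingEnd ℂ) b * z + (starRingEnd ℂ) a) ^ (-(ν - 2))
        * invCR f ((a * z + b) / ((starRingEnd ℂ) b * z + (starRingEnd ℂ) a)) := by
  set c := (starRingEnd ℂ) b with hc
  set d := (starRingEnd ℂ) a with hd
  have hz1 : ‖z‖ < 1 := by simpa using hz
  have hnorm : ‖a‖^2 - ‖b‖^2 = 1 := by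
    simpa [Complex.sq_norm] using hab
  have hba : ‖b‖ < ‖a‖ := by nlinarith [norm_nonneg a, norm_nonneg b]
  have hD : c * z + d ≠ 0 := by
    intro h
    have h2 : d = -(c * z) := by linear_combination h
    have h3 : ‖a‖ = ‖b‖ * ‖z‖ := by
      have := congrArg norm h2
      simpa [hc, hd, norm_mul, RCLike.norm_conj] using this
    nlinarith [norm_nonneg b, norm_nonneg z]
  have hab' : a * d - b * c = 1 := by
    rw [hd, hc, Complex.mul_conj, Complex.mul_conj]
    norm_cast
  set x := c * z + d with hx
  set N := a * z + b with hN
  have hy : (starRingEnd ℂ) x ≠ 0 := by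
    simpa using hD
  -- key identity
  have hE : x * (starRingEnd ℂ) x - N * (starRingEnd ℂ) N
      = 1 - z * (starRingEnd ℂ) z := by
    simp only [hx, hN, hc, hd, map_add, map_mul, Complex.conj_conj]
    linear_combination (1 - z * (starRingEnd ℂ) z) * hab'
  -- φ z in the unit ball
  have hreal : Complex.normSq x - Complex.normSq N = 1 - Complex.normSq z := by
    have := hE
    rw [Complex.mul_conj, Complex.mul_conj, Complex.mul_conj] at this
    exact_mod_cast this
  have hzsq : Complex.normSq z < 1 := by
    rw [Complex.normSq_eq_norm_sq]
    nlinarith [norm_nonneg z]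
  have hNx : ‖N‖ < ‖x‖ := by
    have h1 : Complex.normSq N < Complex.normSq x := by linarith
    rw [Complex.normSq_eq_norm_sq, Complex.normSq_eq_norm_sq] at h1
    nlinarith [norm_nonneg N, norm_nonneg x]
  have hW : N / x ∈ Metric.ball (0 : ℂ) 1 := by
    simp only [Metric.mem_ball, dist_zero_right, norm_div]
    rw [div_lt_one (lt_of_le_of_lt (norm_nonneg N) hNx)]
    exact hNx
  -- differentiability facts
  have hden : HasDerivAt (fun w : ℂ => c * w + d) c z := by
    simpa using ((hasDerivAt_id z).const_mul c).add_const d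
  have hnum : HasDerivAt (fun w : ℂ => a * w + b) a z := by
    simpa using ((hasDerivAt_id z).const_mul a).add_const b
  have hphi : HasDerivAt (fun w : ℂ => (a * w + b) / (c * w + d)) ((x ^ 2)⁻¹) z := by
    have := hnum.fun_div hden hD
    refine this.congr_deriv ?_
    rw [show a * (c*z+d) - (a*z+b)*c = 1 by linear_combination hab', one_div]
  have hh : HasDerivAt (fun w : ℂ => (c * w + d) ^ (-ν))
      ((-ν : ℤ) * (c * z + d) ^ (-ν - 1) * c) z := by
    simpa [Function.comp_def] using (hasDerivAt_zpow (-ν) _ (Or.inl hD)).comp z hden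
  have hfW : DifferentiableAt ℝ f (N / x) :=
    (hf.differentiableOn (by simp)).differentiableAt (Metric.isOpen_ball.mem_nhds hW)
  have hcompd : DifferentiableAt ℝ (fun w => f ((a * w + b) / (c * w + d))) z := by
    have : DifferentiableAt ℝ (fun w : ℂ => (a * w + b) / (c * w + d)) z :=
      (hphi.differentiableAt).restrictScalars ℝ
    exact DifferentiableAt.comp z (by simpa [hN, hx] using hfW) this
  -- compute the Wirtinger bar of the LHS using the lemmas
  have step1 : wirtingerBar (fun w : ℂ =>
      f ((a * w + b) / (c * w + d)) * (c * w + d) ^ (-ν)) z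
      = x ^ (-ν) * ((starRingEnd ℂ) ((x ^ 2)⁻¹) * wirtingerBar f (N / x)) := by
    rw [wb_mul _ _ z _ hcompd hh]
    rw [wb_comp f _ z _ hphi (by simpa [hN, hx] using hfW)]
  -- norm conversions
  have hz2 : ∀ w : ℂ, ((1 - ‖w‖ ^ 2 : ℝ) : ℂ) = 1 - w * (starRingEnd ℂ) w := by
    intro w
    rw [Complex.mul_conj, Complex.normSq_eq_norm_sq]
    push_cast
    ring
  have hW2 := hz2 (N / x)
  have hWW : 1 - (N / x) * (starRingEnd ℂ) (N / x)
      = (1 - z * (starRingEnd ℂ) z) / (x * (starRingEnd ℂ) x) := by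
    rw [map_div₀]
    field_simp
    linear_combination hE
  have hzp : x ^ (-(ν - 2)) = x ^ 2 * x ^ (-ν) := by
    rw [show -(ν - 2) = 2 + (-ν) by ring, zpow_add₀ hD, show ((2:ℤ)) = ((2:ℕ):ℤ) by rfl,
      zpow_natCast]
  -- final computation
  simp only [invCR]
  rw [step1, hz2 z, hW2, hWW, hzp, map_inv₀, map_pow]
  set t := wirtingerBar f (N / x) with ht
  set A := x ^ (-ν) with hA
  set y := (starRingEnd ℂ) x with hyy
  set P := 1 - z * (starRingEnd ℂ) z with hP
  clear_value t A y P
  field_simp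
end

section
/- Let ν be an integer, m a natural number, let a, b ∈ ℂ with |a|² − |b|² = 1, and set φ(z) = (a·z + b)/(conj(b)·z + conj(a)). Let f : ℂ → ℂ be smooth (C^∞ over ℝ) on the open unit disk D. Then for every z ∈ D, D̄^{∘m}[w ↦ f(φ(w))·(conj(b)·w + conj(a))^{−ν}](z) = (conj(b)·z + conj(a))^{−(ν−2m)}·(D̄^{∘m}f)(φ(z)). -/
open Complex

lemma wirtingerBar_congr {f g : ℂ → ℂ} {z : ℂ} (h : f =ᶠ[nhds z] g) :
    wirtingerBar f z = wirtingerBar g z := by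
  unfold wirtingerBar; rw [h.fderiv_eq]

lemma invCR_iterate_congr {s : Set ℂ} (hs : IsOpen s) (m : ℕ) {f g : ℂ → ℂ}
    (h : Set.EqOn f g s) : Set.EqOn (invCR^[m] f) (invCR^[m] g) s := by
  induction m generalizing f g with
  | zero => simpa using h
  | succ m ih =>
    rw [Function.iterate_succ_apply, Function.iterate_succ_apply]
    refine ih fun z hz => ?_
    unfold invCR
    rw [wirtingerBar_congr (Filter.eventuallyEq_of_mem (hs.mem_nhds hz) h)]

lemma clm_apply_eq (L : ℂ →L[ℝ] ℂ) (v : ℂ) :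
    L v = (v.re : ℂ) * L 1 + (v.im : ℂ) * L Complex.I := by
  have h1 : v = v.re • (1 : ℂ) + v.im • Complex.I := by
    simp [Complex.real_smul, Complex.re_add_im]
  conv_lhs => rw [h1]
  rw [map_add, map_smul, map_smul]
  simp [Complex.real_smul]

lemma wirtingerBar_mul {u v : ℂ → ℂ} {z : ℂ} (hu : DifferentiableAt ℝ u z)
    (hv : DifferentiableAt ℝ v z) :
    wirtingerBar (fun w => u w * v w) z
      = wirtingerBar u z * v z + u z * wirtingerBar v z := by
  unfold wirtingerBar
  rw [fderiv_fun_mul hu hv]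
  simp only [ContinuousLinearMap.add_apply, ContinuousLinearMap.smul_apply, smul_eq_mul]
  ring

lemma wirtingerBar_eq_zero {v : ℂ → ℂ} {z : ℂ} (hv : DifferentiableAt ℂ v z) :
    wirtingerBar v z = 0 := by
  unfold wirtingerBar
  have h2 : fderiv ℝ v z = (fderiv ℂ v z).restrictScalars ℝ :=
    (hv.hasFDerivAt.restrictScalars ℝ).fderiv
  have h3 : (fderiv ℂ v z) Complex.I = Complex.I * (fderiv ℂ v z) 1 := by
    rw [show (Complex.I : ℂ) = Complex.I • (1 : ℂ) by simp, map_smul]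
    simp [smul_eq_mul]
  rw [h2]
  simp only [ContinuousLinearMap.coe_restrictScalars', h3]
  rw [← mul_assoc, Complex.I_mul_I]
  ring

lemma wirtingerBar_comp {f φ : ℂ → ℂ} {z : ℂ} (hf : DifferentiableAt ℝ f (φ z))
    (hφ : DifferentiableAt ℂ φ z) :
    wirtingerBar (fun w => f (φ w)) z
      = (starRingEnd ℂ) (deriv φ z) * wirtingerBar f (φ z) := by
  have hφr : DifferentiableAt ℝ φ z := hφ.restrictScalars ℝ
  have hc : fderiv ℝ (fun w => f (φ w)) z = (fderiv ℝ f (φ z)).comp (fderiv ℝ φ z) :=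
    fderiv_comp z hf hφr
  have hφd : fderiv ℝ φ z = (fderiv ℂ φ z).restrictScalars ℝ :=
    (hφ.hasFDerivAt.restrictScalars ℝ).fderiv
  have key : ∀ v : ℂ, (fderiv ℝ φ z) v = v * deriv φ z := by
    intro v
    rw [hφd]
    simp only [ContinuousLinearMap.coe_restrictScalars']
    rw [show v = v • (1 : ℂ) by simp, map_smul]
    simp [smul_eq_mul, fderiv_apply_one_eq_deriv]
  set L := fderiv ℝ f (φ z) with hL
  set p := deriv φ z with hp
  unfold wirtingerBar
  rw [hc]
  simp only [ContinuousLinearMap.coe_comp', Function.comp_apply, key, one_mul]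
  rw [clm_apply_eq L p, clm_apply_eq L (Complex.I * p)]
  have hre : ((Complex.I * p).re : ℂ) = -(p.im : ℂ) := by simp
  have him : ((Complex.I * p).im : ℂ) = (p.re : ℂ) := by simp
  rw [hre, him]
  have hconj : (starRingEnd ℂ) p = (p.re : ℂ) - (p.im : ℂ) * Complex.I := by
    rw [← Complex.re_add_im p]; simp [Complex.ext_iff]
  rw [hconj]
  have hI : Complex.I * Complex.I = -1 := Complex.I_mul_I
  linear_combination (1/2 : ℂ) * (p.im : ℂ) * L Complex.I * hI

lemma c_ne_zero {a b : ℂ} (hab : Complex.normSq a - Complex.normSq b = 1)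
    {z : ℂ} (hz : z ∈ Metric.ball (0 : ℂ) 1) :
    (starRingEnd ℂ) b * z + (starRingEnd ℂ) a ≠ 0 := by
  have hz1 : ‖z‖ < 1 := by simpa using hz
  have hz2 : ‖z‖ < 1 := hz1
  have hb : ‖b‖ < ‖a‖ := by
    have h1 : Complex.normSq b < Complex.normSq a := by linarith [Complex.normSq_nonneg b]
    have ha2 := Complex.sq_norm a
    have hb2 := Complex.sq_norm b
    nlinarith [norm_nonneg a, norm_nonneg b]
  intro h
  have h2 : (starRingEnd ℂ) b * z = -(starRingEnd ℂ) a := by linear_combination h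
  have h3 : ‖b‖ * ‖z‖ = ‖a‖ := by
    have := congrArg norm h2
    simpa [map_mul] using this
  nlinarith [norm_nonneg b, norm_nonneg z]

lemma normSq_key (a b z : ℂ) :
    Complex.normSq ((starRingEnd ℂ) b * z + (starRingEnd ℂ) a) - Complex.normSq (a * z + b)
      = (Complex.normSq a - Complex.normSq b) * (1 - Complex.normSq z) := by
  have h : ∀ w : ℂ, (Complex.normSq w : ℂ) = w * (starRingEnd ℂ) w :=
    fun w => (Complex.mul_conj w).symm
  have hC : ((Complex.normSq ((starRingEnd ℂ) b * z + (starRingEnd ℂ) a)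
        - Complex.normSq (a * z + b) : ℝ) : ℂ)
      = (((Complex.normSq a - Complex.normSq b) * (1 - Complex.normSq z) : ℝ) : ℂ) := by
    push_cast
    rw [h, h, h, h, h]
    simp only [map_add, map_mul, Complex.conj_conj]
    ring
  exact_mod_cast hC

lemma one_sub_normSq_phi {a b : ℂ} (hab : Complex.normSq a - Complex.normSq b = 1)
    {z : ℂ} (hz : z ∈ Metric.ball (0 : ℂ) 1) :
    1 - Complex.normSq ((a * z + b) / ((starRingEnd ℂ) b * z + (starRingEnd ℂ) a))
      = (1 - Complex.normSq z) / Complex.normSq ((starRingEnd ℂ) b * z + (starRingEnd ℂ) a) := by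
  have hc := c_ne_zero hab hz
  have hcs : Complex.normSq ((starRingEnd ℂ) b * z + (starRingEnd ℂ) a) ≠ 0 := by
    simpa [Complex.normSq_eq_zero] using hc
  rw [Complex.normSq_div]
  have hk := normSq_key a b z
  rw [hab, one_mul] at hk
  rw [eq_div_iff hcs, sub_mul, div_mul_cancel₀ _ hcs]
  linarith

lemma phi_mem_ball {a b : ℂ} (hab : Complex.normSq a - Complex.normSq b = 1)
    {z : ℂ} (hz : z ∈ Metric.ball (0 : ℂ) 1) :
    (a * z + b) / ((starRingEnd ℂ) b * z + (starRingEnd ℂ) a) ∈ Metric.ball (0 : ℂ) 1 := by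
  have hz1 : ‖z‖ < 1 := by simpa using hz
  have h0 : Complex.normSq z < 1 := by
    have h := Complex.sq_norm z
    nlinarith [norm_nonneg z]
  have hc := c_ne_zero hab hz
  have hcs : 0 < Complex.normSq ((starRingEnd ℂ) b * z + (starRingEnd ℂ) a) :=
    Complex.normSq_pos.mpr hc
  have h1 : Complex.normSq ((a * z + b) / ((starRingEnd ℂ) b * z + (starRingEnd ℂ) a)) < 1 := by
    have := one_sub_normSq_phi hab hz
    nlinarith [div_pos (by linarith : (0:ℝ) < 1 - Complex.normSq z) hcs]
  have h2 : ‖(a * z + b) / ((starRingEnd ℂ) b * z + (starRingEnd ℂ) a)‖ ^ 2 < 1 := by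
    rw [← Complex.sq_norm] at h1
    exact h1
  have : ‖(a * z + b) / ((starRingEnd ℂ) b * z + (starRingEnd ℂ) a)‖ < 1 := by
    nlinarith [norm_nonneg ((a * z + b) / ((starRingEnd ℂ) b * z + (starRingEnd ℂ) a))]
  simpa using this

lemma deriv_phi {a b : ℂ} (hab : Complex.normSq a - Complex.normSq b = 1)
    {z : ℂ} (hc : (starRingEnd ℂ) b * z + (starRingEnd ℂ) a ≠ 0) :
    deriv (fun w => (a * w + b) / ((starRingEnd ℂ) b * w + (starRingEnd ℂ) a)) z
      = (((starRingEnd ℂ) b * z + (starRingEnd ℂ) a) ^ 2)⁻¹ := by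
  have h1 : a * (starRingEnd ℂ) a - b * (starRingEnd ℂ) b = 1 := by
    rw [Complex.mul_conj, Complex.mul_conj]; exact_mod_cast hab
  have hnum : HasDerivAt (fun w : ℂ => a * w + b) a z := by
    simpa using ((hasDerivAt_id z).const_mul a).add_const b
  have hden : HasDerivAt (fun w : ℂ => (starRingEnd ℂ) b * w + (starRingEnd ℂ) a)
      ((starRingEnd ℂ) b) z := by
    simpa using ((hasDerivAt_id z).const_mul ((starRingEnd ℂ) b)).add_const ((starRingEnd ℂ) a)
  have hd := (hnum.fun_div hden hc).deriv
  rw [hd]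
  rw [div_eq_iff (pow_ne_zero 2 hc), inv_mul_cancel₀ (pow_ne_zero 2 hc)]
  linear_combination h1

lemma invCR_contDiffOn {f : ℂ → ℂ} (hf : ContDiffOn ℝ (⊤ : ℕ∞) f (Metric.ball (0 : ℂ) 1)) :
    ContDiffOn ℝ (⊤ : ℕ∞) (invCR f) (Metric.ball (0 : ℂ) 1) := by
  have h1 : ContDiffOn ℝ (⊤ : ℕ∞) (fun z => fderiv ℝ f z) (Metric.ball (0 : ℂ) 1) :=
    hf.fderiv_of_isOpen Metric.isOpen_ball (by simp)
  have h2 : ContDiff ℝ (⊤ : ℕ∞) (fun z : ℂ => ((1 - ‖z‖ ^ 2 : ℝ) : ℂ)) := by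
    have he : (fun z : ℂ => ((1 - ‖z‖ ^ 2 : ℝ) : ℂ)) = fun z => 1 - z * (starRingEnd ℂ) z := by
      funext z
      rw [Complex.mul_conj]
      push_cast [← Complex.sq_norm]
      norm_num
    rw [he]
    exact contDiff_const.sub (contDiff_id.mul (Complex.conjCLE : ℂ ≃L[ℝ] ℂ).contDiff)
  unfold invCR wirtingerBar
  exact ((h2.pow 2).contDiffOn).mul (contDiffOn_const.mul
    ((h1.clm_apply contDiffOn_const).add (contDiffOn_const.mul (h1.clm_apply contDiffOn_const))))

lemma invCR_step {a b : ℂ} (hab : Complex.normSq a - Complex.normSq b = 1) {f : ℂ → ℂ}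
    {z : ℂ} (hz : z ∈ Metric.ball (0 : ℂ) 1)
    (hfd : DifferentiableAt ℝ f ((a * z + b) / ((starRingEnd ℂ) b * z + (starRingEnd ℂ) a)))
    (ν : ℤ) :
    invCR (fun w => f ((a * w + b) / ((starRingEnd ℂ) b * w + (starRingEnd ℂ) a))
        * ((starRingEnd ℂ) b * w + (starRingEnd ℂ) a) ^ (-ν)) z
      = ((starRingEnd ℂ) b * z + (starRingEnd ℂ) a) ^ (-(ν - 2))
        * invCR f ((a * z + b) / ((starRingEnd ℂ) b * z + (starRingEnd ℂ) a)) := by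
  have hc : (starRingEnd ℂ) b * z + (starRingEnd ℂ) a ≠ 0 := c_ne_zero hab hz
  have hcb : (starRingEnd ℂ) ((starRingEnd ℂ) b * z + (starRingEnd ℂ) a) ≠ 0 := by
    intro h
    apply hc
    have := congrArg (starRingEnd ℂ) h
    simpa using this
  have hdden : DifferentiableAt ℂ
      (fun w : ℂ => (starRingEnd ℂ) b * w + (starRingEnd ℂ) a) z :=
    (differentiableAt_id.const_mul _).add_const _
  have hdnum : DifferentiableAt ℂ (fun w : ℂ => a * w + b) z :=
    (differentiableAt_id.const_mul _).add_const _
  have hφd : DifferentiableAt ℂ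
      (fun w => (a * w + b) / ((starRingEnd ℂ) b * w + (starRingEnd ℂ) a)) z :=
    hdnum.div hdden hc
  have hvd : DifferentiableAt ℂ
      (fun w : ℂ => ((starRingEnd ℂ) b * w + (starRingEnd ℂ) a) ^ (-ν)) z :=
    hdden.zpow (Or.inl hc)
  have hud : DifferentiableAt ℝ
      (fun w => f ((a * w + b) / ((starRingEnd ℂ) b * w + (starRingEnd ℂ) a))) z :=
    hfd.comp z (hφd.restrictScalars ℝ)
  unfold invCR
  rw [wirtingerBar_mul hud (hvd.restrictScalars ℝ), wirtingerBar_eq_zero hvd,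
    wirtingerBar_comp (φ := fun w => (a * w + b) / ((starRingEnd ℂ) b * w + (starRingEnd ℂ) a))
      hfd hφd, deriv_phi hab hc]
  set C := (starRingEnd ℂ) b * z + (starRingEnd ℂ) a with hC
  set Cb := (starRingEnd ℂ) C with hCb
  set W := wirtingerBar f ((a * z + b) / C) with hW
  have hconjinv : (starRingEnd ℂ) ((C ^ 2)⁻¹) = (Cb ^ 2)⁻¹ := by
    rw [map_inv₀, map_pow]
  rw [hconjinv]
  have hnz : ((1 - ‖z‖ ^ 2 : ℝ) : ℂ) = ((1 - Complex.normSq z : ℝ) : ℂ) := by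
    push_cast [← Complex.sq_norm]
    norm_num
  have hnφ : ((1 - ‖(a * z + b) / C‖ ^ 2 : ℝ) : ℂ)
      = ((1 - Complex.normSq z : ℝ) : ℂ) / (C * Cb) := by
    have h1 : ((1 - ‖(a * z + b) / C‖ ^ 2 : ℝ) : ℂ)
        = ((1 - Complex.normSq ((a * z + b) / C) : ℝ) : ℂ) := by
      push_cast [← Complex.sq_norm]
      norm_num
    rw [h1, one_sub_normSq_phi hab hz]
    push_cast
    rw [show (Complex.normSq C : ℂ) = C * Cb from (Complex.mul_conj C).symm]
  rw [hnz, hnφ]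
  set X := ((1 - Complex.normSq z : ℝ) : ℂ) with hX
  have hsplit : C ^ (-(ν - 2)) = C ^ (-ν) * C ^ 2 := by
    rw [show -(ν - 2) = -ν + 2 by ring, zpow_add₀ hc, zpow_two, sq]
  rw [hsplit]
  set P := C ^ (-ν) with hP
  field_simp
  ring

/-- `D̄^{∘m}` intertwines the `SU(1,1)`-action `π_ν` with the weight-`(ν−2m)` action on
the unit disk: for `|a|²−|b|²=1`, `φ(z) = (az+b)/(b̄z+ā)` and `f` smooth on the disk,
`D̄^{∘m}[w ↦ f(φ(w))·(b̄w+ā)^{−ν}](z) = (b̄z+ā)^{−(ν−2m)}·(D̄^{∘m}f)(φ(z))`. -/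
theorem invCR_iterate_intertwines_projective_action (ν : ℤ) (m : ℕ) (a b : ℂ)
    (hab : Complex.normSq a - Complex.normSq b = 1) (f : ℂ → ℂ)
    (hf : ContDiffOn ℝ (⊤ : ℕ∞) f (Metric.ball (0 : ℂ) 1)) (z : ℂ)
    (hz : z ∈ Metric.ball (0 : ℂ) 1) :
    invCR^[m] (fun w : ℂ =>
        f ((a * w + b) / ((starRingEnd ℂ) b * w + (starRingEnd ℂ) a))
          * ((starRingEnd ℂ) b * w + (starRingEnd ℂ) a) ^ (-ν)) z
      = ((starRingEnd ℂ) b * z + (starRingEnd ℂ) a) ^ (-(ν - 2 * (m : ℤ)))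
        * invCR^[m] f ((a * z + b) / ((starRingEnd ℂ) b * z + (starRingEnd ℂ) a)) := by
  induction m generalizing ν f with
  | zero =>
    simp only [Function.iterate_zero, id_eq]
    rw [show (-(ν - 2 * ((0 : ℕ) : ℤ))) = -ν by push_cast; ring]
    ring
  | succ m ih =>
    rw [Function.iterate_succ_apply]
    have hEq : Set.EqOn
        (invCR (fun w : ℂ =>
          f ((a * w + b) / ((starRingEnd ℂ) b * w + (starRingEnd ℂ) a))
            * ((starRingEnd ℂ) b * w + (starRingEnd ℂ) a) ^ (-ν)))
        (fun w : ℂ =>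
          invCR f ((a * w + b) / ((starRingEnd ℂ) b * w + (starRingEnd ℂ) a))
            * ((starRingEnd ℂ) b * w + (starRingEnd ℂ) a) ^ (-(ν - 2)))
        (Metric.ball (0 : ℂ) 1) := by
      intro w hw
      have hfd : DifferentiableAt ℝ f
          ((a * w + b) / ((starRingEnd ℂ) b * w + (starRingEnd ℂ) a)) :=
        (hf.differentiableOn (by simp)).differentiableAt
          (Metric.isOpen_ball.mem_nhds (phi_mem_ball hab hw))
      rw [invCR_step hab hw hfd ν]
      ring
    rw [invCR_iterate_congr Metric.isOpen_ball m hEq hz,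
      ih (ν - 2) (invCR f) (invCR_contDiffOn hf), ← Function.iterate_succ_apply,
      show (-((ν - 2) - 2 * (m : ℤ))) = -(ν - 2 * ((m + 1 : ℕ) : ℤ)) by push_cast; ring]
end

section
/- Let m be a natural number and let f : ℂ → ℂ be smooth (C^∞ over ℝ) on the open unit disk D. Then D̄^{∘(m+1)} f(z) = 0 for all z ∈ D if and only if there exist functions c₀, c₁, …, c_m : ℂ → ℂ, each holomorphic (complex-differentiable) on D, such that f(z) = Σ_{k=0}^{m} c_k(z)·(conj(z)/(1−|z|²))^k for all z ∈ D. -/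
open Complex

namespace NearlyHolo

noncomputable def barL (L : ℂ →L[ℝ] ℂ) : ℂ := (1 / 2) * (L 1 + Complex.I * L Complex.I)

lemma wB_eq_barL (f : ℂ → ℂ) (z : ℂ) : wirtingerBar f z = barL (fderiv ℝ f z) := rfl

lemma wB_of_hasFDerivAt {f : ℂ → ℂ} {L : ℂ →L[ℝ] ℂ} {z : ℂ} (h : HasFDerivAt f L z) :
    wirtingerBar f z = barL L := by rw [wB_eq_barL, h.fderiv]

lemma wB_congr {f g : ℂ → ℂ} {z : ℂ} (h : f =ᶠ[nhds z] g) :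
    wirtingerBar f z = wirtingerBar g z := by
  unfold wirtingerBar; rw [h.fderiv_eq]

lemma barL_add (L M : ℂ →L[ℝ] ℂ) : barL (L + M) = barL L + barL M := by
  simp [barL]; ring

lemma barL_smul (a : ℂ) (L : ℂ →L[ℝ] ℂ) : barL (a • L) = a * barL L := by
  simp [barL, smul_eq_mul]; ring

lemma wB_const (a z : ℂ) : wirtingerBar (fun _ => a) z = 0 := by
  rw [wB_of_hasFDerivAt (hasFDerivAt_const a z)]
  simp [barL]

lemma wB_mul {f g : ℂ → ℂ} {z : ℂ} (hf : DifferentiableAt ℝ f z)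
    (hg : DifferentiableAt ℝ g z) :
    wirtingerBar (fun w => f w * g w) z
      = f z * wirtingerBar g z + g z * wirtingerBar f z := by
  rw [wB_of_hasFDerivAt (hf.hasFDerivAt.fun_mul hg.hasFDerivAt), barL_add, barL_smul, barL_smul,
    wB_eq_barL, wB_eq_barL]

lemma wB_sub {f g : ℂ → ℂ} {z : ℂ} (hf : DifferentiableAt ℝ f z)
    (hg : DifferentiableAt ℝ g z) :
    wirtingerBar (fun w => f w - g w) z = wirtingerBar f z - wirtingerBar g z := by
  rw [wB_of_hasFDerivAt (hf.hasFDerivAt.fun_sub hg.hasFDerivAt)]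
  simp only [barL, ContinuousLinearMap.coe_sub', Pi.sub_apply, wirtingerBar]
  ring

lemma clin_apply (A : ℂ →L[ℂ] ℂ) (v : ℂ) : A v = v * A 1 := by
  rw [show v = v • (1 : ℂ) by simp, map_smul]; simp [smul_eq_mul]

lemma wB_holo {f : ℂ → ℂ} {z : ℂ} (h : DifferentiableAt ℂ f z) : wirtingerBar f z = 0 := by
  rw [wB_of_hasFDerivAt ((h.hasFDerivAt).restrictScalars ℝ)]
  simp only [barL, ContinuousLinearMap.coe_restrictScalars']
  rw [clin_apply _ Complex.I, clin_apply _ 1]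
  simp only [one_mul]
  ring_nf
  simp [Complex.I_sq]

lemma wB_comp_holo {φ g : ℂ → ℂ} {z : ℂ} (hφ : DifferentiableAt ℂ φ (g z))
    (hg : DifferentiableAt ℝ g z) :
    wirtingerBar (fun w => φ (g w)) z = deriv φ (g z) * wirtingerBar g z := by
  have h2 := ((hφ.hasFDerivAt).restrictScalars ℝ).comp z hg.hasFDerivAt
  rw [show (fun w => φ (g w)) = φ ∘ g from rfl, wB_of_hasFDerivAt h2]
  simp only [barL, ContinuousLinearMap.coe_comp', Function.comp_apply,
    ContinuousLinearMap.coe_restrictScalars']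
  rw [clin_apply _ ((fderiv ℝ g z) 1), clin_apply _ ((fderiv ℝ g z) Complex.I)]
  rw [← fderiv_apply_one_eq_deriv]
  simp [wirtingerBar]; ring

lemma wB_conj (z : ℂ) : wirtingerBar (fun w => (starRingEnd ℂ) w) z = 1 := by
  have h : HasFDerivAt (fun w : ℂ => (starRingEnd ℂ) w)
      (Complex.conjCLE : ℂ →L[ℝ] ℂ) z := by
    exact Complex.conjCLE.hasFDerivAt (x := z)
  rw [wB_of_hasFDerivAt h]
  simp only [barL, Complex.conjCLE_apply, map_one, Complex.conj_I, mul_neg,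
    Complex.I_mul_I, neg_neg]
  norm_num


lemma wB_pow {g : ℂ → ℂ} {z : ℂ} (hg : DifferentiableAt ℝ g z) (k : ℕ) :
    wirtingerBar (fun w => g w ^ k) z = (k : ℂ) * g z ^ (k - 1) * wirtingerBar g z := by
  induction k with
  | zero => simp [wB_const 1 z]
  | succ n ih =>
    have hgn : DifferentiableAt ℝ (fun w => g w ^ n) z := hg.pow n
    rw [show (fun w => g w ^ (n + 1)) = (fun w => g w ^ n * g w) by
      funext w; ring]
    rw [wB_mul hgn hg, ih]
    cases n with
    | zero => simp
    | succ p =>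
      push_cast
      ring

lemma wB_sum {s : Finset ℕ} {F : ℕ → ℂ → ℂ} {z : ℂ}
    (hF : ∀ k ∈ s, DifferentiableAt ℝ (F k) z) :
    wirtingerBar (fun w => ∑ k ∈ s, F k w) z = ∑ k ∈ s, wirtingerBar (F k) z := by
  have h := HasFDerivAt.fun_sum (fun k hk => (hF k hk).hasFDerivAt)
  rw [wB_of_hasFDerivAt h]
  simp only [barL, wirtingerBar, ContinuousLinearMap.coe_sum', Finset.sum_apply, Finset.mul_sum,
    ← Finset.sum_add_distrib]

/-- the basic nearly-holomorphic generator -/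
noncomputable def q (z : ℂ) : ℂ := (starRingEnd ℂ) z / ((1 - ‖z‖ ^ 2 : ℝ) : ℂ)

lemma r_eq (z : ℂ) : ((1 - ‖z‖ ^ 2 : ℝ) : ℂ) = 1 - z * (starRingEnd ℂ) z := by
  rw [Complex.mul_conj]
  norm_cast
  rw [Complex.sq_norm]

lemma r_ne {z : ℂ} (hz : z ∈ Metric.ball (0 : ℂ) 1) : ((1 - ‖z‖ ^ 2 : ℝ) : ℂ) ≠ 0 := by
  have h1 : ‖z‖ < 1 := by simpa using hz
  have : (0:ℝ) < 1 - ‖z‖ ^ 2 := by nlinarith [norm_nonneg z]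
  exact Complex.ofReal_ne_zero.mpr this.ne'

lemma q_eq : q = fun w => (starRingEnd ℂ) w * (1 - w * (starRingEnd ℂ) w)⁻¹ := by
  funext w
  rw [q, div_eq_mul_inv, r_eq]

lemma conj_diff (z : ℂ) : DifferentiableAt ℝ (fun w : ℂ => (starRingEnd ℂ) w) z := by
  exact (Complex.conjCLE.differentiable.differentiableAt (x := z))

lemma inner_diff (z : ℂ) :
    DifferentiableAt ℝ (fun w : ℂ => 1 - w * (starRingEnd ℂ) w) z :=
  (differentiableAt_const 1).sub (differentiableAt_fun_id.mul (conj_diff z))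

lemma q_diff {z : ℂ} (hz : z ∈ Metric.ball (0 : ℂ) 1) : DifferentiableAt ℝ q z := by
  rw [q_eq]
  have hne : (1 - z * (starRingEnd ℂ) z) ≠ 0 := by rw [← r_eq]; exact r_ne hz
  have hinv : DifferentiableAt ℝ (fun w : ℂ => (1 - w * (starRingEnd ℂ) w)⁻¹) z := by
    have h1 : DifferentiableAt ℂ (fun u : ℂ => u⁻¹) (1 - z * (starRingEnd ℂ) z) :=
      differentiableAt_inv hne
    exact (h1.restrictScalars ℝ).comp z (inner_diff z)
  exact (conj_diff z).mul hinv

lemma wB_inner (z : ℂ) :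
    wirtingerBar (fun w : ℂ => 1 - w * (starRingEnd ℂ) w) z = -z := by
  rw [show (fun w : ℂ => 1 - w * (starRingEnd ℂ) w)
      = (fun w : ℂ => (fun _ => (1:ℂ)) w - (fun w => w * (starRingEnd ℂ) w) w) from rfl]
  rw [wB_sub (differentiableAt_const 1) (differentiableAt_fun_id.fun_mul (conj_diff z)),
    wB_const, wB_mul differentiableAt_fun_id (conj_diff z), wB_conj,
    wB_holo differentiableAt_fun_id]
  ring

lemma wB_q {z : ℂ} (hz : z ∈ Metric.ball (0 : ℂ) 1) :
    wirtingerBar q z = (((1 - ‖z‖ ^ 2 : ℝ) : ℂ) ^ 2)⁻¹ := by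
  have hne : (1 - z * (starRingEnd ℂ) z) ≠ 0 := by rw [← r_eq]; exact r_ne hz
  have hinv : wirtingerBar (fun w : ℂ => (1 - w * (starRingEnd ℂ) w)⁻¹) z
      = z * ((1 - z * (starRingEnd ℂ) z) ^ 2)⁻¹ := by
    have h1 : DifferentiableAt ℂ (fun u : ℂ => u⁻¹) (1 - z * (starRingEnd ℂ) z) :=
      differentiableAt_inv hne
    have := wB_comp_holo (φ := fun u : ℂ => u⁻¹)
      (g := fun w : ℂ => 1 - w * (starRingEnd ℂ) w) h1 (inner_diff z)
    rw [this, wB_inner, deriv_inv]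
    ring
  have hdinv : DifferentiableAt ℝ (fun w : ℂ => (1 - w * (starRingEnd ℂ) w)⁻¹) z := by
    have h1 : DifferentiableAt ℂ (fun u : ℂ => u⁻¹) (1 - z * (starRingEnd ℂ) z) :=
      differentiableAt_inv hne
    exact (h1.restrictScalars ℝ).comp z (inner_diff z)
  rw [q_eq, wB_mul (conj_diff z) hdinv, hinv, wB_conj, r_eq]
  have h2 : z * (starRingEnd ℂ) z = 1 - (1 - z * (starRingEnd ℂ) z) := by ring
  field_simp
  ring


local notation "𝔻" => Metric.ball (0:ℂ) 1

lemma invCR_rep {n : ℕ} {c : ℕ → ℂ → ℂ}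
    (hc : ∀ k ≤ n, DifferentiableOn ℂ (c k) 𝔻) {f : ℂ → ℂ}
    (hrep : ∀ z ∈ 𝔻, f z = ∑ k ∈ Finset.range (n+1), c k z * q z ^ k) :
    ∀ z ∈ 𝔻, invCR f z = ∑ k ∈ Finset.range n, (((k:ℂ)+1) * c (k+1) z) * q z ^ k := by
  intro z hz
  have hmem : 𝔻 ∈ nhds z := Metric.isOpen_ball.mem_nhds hz
  have heq : f =ᶠ[nhds z] fun w => ∑ k ∈ Finset.range (n+1), c k w * q w ^ k :=
    Filter.eventuallyEq_of_mem hmem hrep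
  have hck : ∀ k ∈ Finset.range (n+1), DifferentiableAt ℝ (c k) z := fun k hk =>
    ((hc k (Nat.lt_succ_iff.mp (Finset.mem_range.mp hk))).differentiableAt hmem).restrictScalars ℝ
  have hckC : ∀ k ∈ Finset.range (n+1), DifferentiableAt ℂ (c k) z := fun k hk =>
    (hc k (Nat.lt_succ_iff.mp (Finset.mem_range.mp hk))).differentiableAt hmem
  have hdiffs : ∀ k ∈ Finset.range (n+1),
      DifferentiableAt ℝ (fun w => c k w * q w ^ k) z := fun k hk =>
    (hck k hk).mul ((q_diff hz).pow k)
  have hwB : wirtingerBar f z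
      = ∑ k ∈ Finset.range (n+1),
          (k:ℂ) * c k z * q z ^ (k-1) * ((((1 - ‖z‖ ^ 2 : ℝ) : ℂ)) ^ 2)⁻¹ := by
    rw [wB_congr heq, wB_sum hdiffs]
    refine Finset.sum_congr rfl fun k hk => ?_
    rw [wB_mul (hck k hk) ((q_diff hz).fun_pow k), wB_pow (q_diff hz) k, wB_q hz,
      wB_holo (hckC k hk)]
    ring
  have hr2 : (((1 - ‖z‖ ^ 2 : ℝ) : ℂ)) ^ 2 ≠ 0 := pow_ne_zero 2 (r_ne hz)
  have h2 : invCR f z = ∑ k ∈ Finset.range (n+1), (k:ℂ) * c k z * q z ^ (k-1) := by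
    show (((1 - ‖z‖ ^ 2 : ℝ) : ℂ)) ^ 2 * wirtingerBar f z = _
    rw [hwB, Finset.mul_sum]
    refine Finset.sum_congr rfl fun k hk => ?_
    rw [mul_comm ((k:ℂ) * c k z * q z ^ (k - 1)) ((((1 - ‖z‖ ^ 2 : ℝ) : ℂ)) ^ 2)⁻¹,
      ← mul_assoc, mul_inv_cancel₀ hr2, one_mul]
  rw [h2, Finset.sum_range_succ']
  simp only [Nat.cast_zero, zero_mul, add_zero, Nat.cast_add, Nat.cast_one,
    Nat.add_sub_cancel]

lemma holo_of_wB_zero {f : ℂ → ℂ} (hd : ∀ z ∈ 𝔻, DifferentiableAt ℝ f z)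
    (h0 : ∀ z ∈ 𝔻, wirtingerBar f z = 0) :
    DifferentiableOn ℂ f 𝔻 := by
  intro z hz
  have hdz := hd z hz
  set L := fderiv ℝ f z with hLdef
  have h1 : L 1 + Complex.I * L Complex.I = 0 := by
    have h := h0 z hz
    rw [wirtingerBar] at h
    rw [← hLdef] at h
    field_simp at h
    linear_combination h
  have hLI : L Complex.I = Complex.I * L 1 := by
    linear_combination (-Complex.I) * h1 + (L Complex.I) * Complex.I_sq
  have key : ∀ v : ℂ, L v = v * L 1 := by
    intro v
    have hv : v = (v.re : ℝ) • (1:ℂ) + (v.im : ℝ) • Complex.I := by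
      simp [Complex.real_smul]
    rw [hv, map_add, map_smul, map_smul, hLI]
    simp only [Complex.real_smul]
    push_cast
    ring
  set A : ℂ →L[ℂ] ℂ := (L 1) • (ContinuousLinearMap.id ℂ ℂ) with hA
  have hres : A.restrictScalars ℝ = L := by
    apply ContinuousLinearMap.ext
    intro v
    have : A v = L 1 * v := by simp [hA, smul_eq_mul]
    simp only [ContinuousLinearMap.coe_restrictScalars']
    rw [this, key v]
    ring
  exact (hasFDerivAt_of_restrictScalars ℝ hdz.hasFDerivAt hres).differentiableAt.differentiableWithinAt


lemma invCR_contDiffOn {f : ℂ → ℂ} (hf : ContDiffOn ℝ (⊤ : ℕ∞) f 𝔻) :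
    ContDiffOn ℝ (⊤ : ℕ∞) (invCR f) 𝔻 := by
  have hA : ContDiffOn ℝ (⊤ : ℕ∞) (fderiv ℝ f) 𝔻 :=
    hf.fderiv_of_isOpen Metric.isOpen_ball (by simp)
  have h1 : ContDiffOn ℝ (⊤ : ℕ∞) (fun z => (fderiv ℝ f z) 1) 𝔻 :=
    (ContinuousLinearMap.apply ℝ ℂ (1:ℂ)).contDiff.comp_contDiffOn hA
  have hI : ContDiffOn ℝ (⊤ : ℕ∞) (fun z => (fderiv ℝ f z) Complex.I) 𝔻 :=
    (ContinuousLinearMap.apply ℝ ℂ (Complex.I)).contDiff.comp_contDiffOn hA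
  have hconj : ContDiff ℝ (⊤ : ℕ∞) (fun z : ℂ => (starRingEnd ℂ) z) := by
    have := Complex.conjCLE.contDiff (𝕜 := ℝ) (n := (⊤ : ℕ∞))
    exact this
  have hr : ContDiff ℝ (⊤ : ℕ∞) (fun z : ℂ => ((1 - ‖z‖ ^ 2 : ℝ) : ℂ)) := by
    have he : (fun z : ℂ => ((1 - ‖z‖ ^ 2 : ℝ) : ℂ))
        = fun z => 1 - z * (starRingEnd ℂ) z := by
      funext z; rw [r_eq]
    rw [he]
    exact contDiff_const.sub (contDiff_id.mul hconj)
  show ContDiffOn ℝ (⊤ : ℕ∞) (fun z => ((1 - ‖z‖ ^ 2 : ℝ) : ℂ) ^ 2 * wirtingerBar f z) 𝔻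
  unfold wirtingerBar
  exact ((hr.pow 2).contDiffOn).mul
    (contDiffOn_const.mul (h1.add (contDiffOn_const.mul hI)))

lemma forward_dir (m : ℕ) : ∀ (f : ℂ → ℂ) (c : ℕ → ℂ → ℂ),
    (∀ k ≤ m, DifferentiableOn ℂ (c k) 𝔻) →
    (∀ z ∈ 𝔻, f z = ∑ k ∈ Finset.range (m+1), c k z * q z ^ k) →
    ∀ z ∈ 𝔻, invCR^[m+1] f z = 0 := by
  induction m with
  | zero =>
    intro f c hc hrep z hz
    have := invCR_rep hc hrep z hz
    simpa using this
  | succ n ih =>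
    intro f c hc hrep z hz
    rw [Function.iterate_succ_apply]
    exact ih (invCR f) (fun k w => ((k:ℂ)+1) * c (k+1) w)
      (fun k hk => ((hc (k+1) (by omega)).const_smul ((k:ℂ)+1)).congr
        (fun w _ => by simp [smul_eq_mul]))
      (invCR_rep hc hrep) z hz

lemma reverse_dir (m : ℕ) : ∀ (f : ℂ → ℂ),
    ContDiffOn ℝ (⊤ : ℕ∞) f 𝔻 →
    (∀ z ∈ 𝔻, invCR^[m+1] f z = 0) →
    ∃ c : ℕ → ℂ → ℂ, (∀ k ≤ m, DifferentiableOn ℂ (c k) 𝔻) ∧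
      ∀ z ∈ 𝔻, f z = ∑ k ∈ Finset.range (m+1), c k z * q z ^ k := by
  induction m with
  | zero =>
    intro f hf h0
    have hd : ∀ z ∈ 𝔻, DifferentiableAt ℝ f z := fun z hz =>
      ((hf.contDiffAt (Metric.isOpen_ball.mem_nhds hz)).differentiableAt (by simp))
    have hw : ∀ z ∈ 𝔻, wirtingerBar f z = 0 := by
      intro z hz
      have h := h0 z hz
      rw [Function.iterate_one] at h
      have h' : ((1 - ‖z‖ ^ 2 : ℝ) : ℂ) ^ 2 * wirtingerBar f z = 0 := h
      exact (mul_eq_zero.mp h').resolve_left (pow_ne_zero 2 (r_ne hz))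
    exact ⟨fun _ => f, fun k _ => holo_of_wB_zero hd hw, fun z hz => by simp⟩
  | succ n ih =>
    intro f hf h0
    have hg : ContDiffOn ℝ (⊤ : ℕ∞) (invCR f) 𝔻 := invCR_contDiffOn hf
    have h0' : ∀ z ∈ 𝔻, invCR^[n+1] (invCR f) z = 0 := by
      intro z hz
      rw [← Function.iterate_succ_apply]
      exact h0 z hz
    obtain ⟨b, hb, hbrep⟩ := ih (invCR f) hg h0'
    set S : ℂ → ℂ := fun w => ∑ k ∈ Finset.range (n+1), (b k w / ((k:ℂ)+1)) * q w ^ (k+1)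
      with hS
    -- extended coefficients for S
    set c'' : ℕ → ℂ → ℂ := fun k => if k = 0 then (fun _ => 0)
      else fun w => b (k-1) w / ((k:ℕ):ℂ) with hc''
    have hc''holo : ∀ k ≤ n+1, DifferentiableOn ℂ (c'' k) 𝔻 := by
      intro k hk
      rcases k with _ | j
      · simpa [hc''] using differentiableOn_const (0:ℂ)
      · have := (hb j (by omega)).div_const (((j+1:ℕ)):ℂ)
        simpa [hc''] using this
    have hSrep : ∀ z ∈ 𝔻, S z = ∑ k ∈ Finset.range (n+2), c'' k z * q z ^ k := by
      intro z hz
      rw [Finset.sum_range_succ']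
      simp only [hc'', if_pos rfl]
      simp only [Nat.add_sub_cancel, if_neg (Nat.succ_ne_zero _)]
      push_cast
      simp [hS]
    have hinvS : ∀ z ∈ 𝔻, invCR S z = invCR f z := by
      intro z hz
      rw [invCR_rep hc''holo hSrep z hz, hbrep z hz]
      refine Finset.sum_congr rfl fun k hk => ?_
      simp only [hc'', if_neg (Nat.succ_ne_zero _), Nat.add_sub_cancel]
      have hk1 : ((k:ℂ)+1) ≠ 0 := Nat.cast_add_one_ne_zero k
      push_cast
      field_simp
    have hSdiff : ∀ z ∈ 𝔻, DifferentiableAt ℝ S z := by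
      intro z hz
      refine DifferentiableAt.fun_sum fun k hk => ?_
      have hbk : DifferentiableAt ℝ (b k) z :=
        ((hb k (Nat.lt_succ_iff.mp (Finset.mem_range.mp hk))).differentiableAt
          (Metric.isOpen_ball.mem_nhds hz)).restrictScalars ℝ
      have hdiv : DifferentiableAt ℝ (fun w => b k w / ((k:ℂ)+1)) z := by
        simp only [div_eq_mul_inv]
        exact hbk.mul_const _
      exact hdiv.mul ((q_diff hz).pow (k+1))
    have hfd : ∀ z ∈ 𝔻, DifferentiableAt ℝ f z := fun z hz =>
      ((hf.contDiffAt (Metric.isOpen_ball.mem_nhds hz)).differentiableAt (by simp))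
    have hwh : ∀ z ∈ 𝔻, wirtingerBar (fun w => f w - S w) z = 0 := by
      intro z hz
      rw [wB_sub (hfd z hz) (hSdiff z hz)]
      have h1 := hinvS z hz
      have h2 : ((1 - ‖z‖ ^ 2 : ℝ) : ℂ) ^ 2 * wirtingerBar S z
          = ((1 - ‖z‖ ^ 2 : ℝ) : ℂ) ^ 2 * wirtingerBar f z := h1
      have := mul_left_cancel₀ (pow_ne_zero 2 (r_ne hz)) h2
      rw [this]; ring
    have hh : DifferentiableOn ℂ (fun w => f w - S w) 𝔻 :=
      holo_of_wB_zero (fun z hz => (hfd z hz).sub (hSdiff z hz)) hwh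
    refine ⟨fun k => if k = 0 then (fun w => f w - S w)
      else fun w => b (k-1) w / ((k:ℕ):ℂ), ?_, ?_⟩
    · intro k hk
      rcases k with _ | j
      · simpa using hh
      · have := (hb j (by omega)).div_const (((j+1:ℕ)):ℂ)
        simpa using this
    · intro z hz
      rw [Finset.sum_range_succ']
      simp only [if_pos rfl, if_neg (Nat.succ_ne_zero _), Nat.add_sub_cancel]
      push_cast
      simp [hS]

end NearlyHolo

/-- A smooth function `f` on the unit disk is annihilated by `D̄^{∘(m+1)}` iff it is nearly
holomorphic of degree `≤ m`: `f(z) = Σ_{k=0}^m c_k(z)·(conj(z)/(1−|z|²))^k` with each `c_k`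
holomorphic on the disk. -/
theorem ker_invCR_iterate_eq_nearlyHolomorphic (m : ℕ) (f : ℂ → ℂ)
    (hf : ContDiffOn ℝ (⊤ : ℕ∞) f (Metric.ball (0 : ℂ) 1)) :
    (∀ z ∈ Metric.ball (0 : ℂ) 1, invCR^[m + 1] f z = 0)
      ↔ ∃ c : ℕ → ℂ → ℂ,
          (∀ k ≤ m, DifferentiableOn ℂ (c k) (Metric.ball (0 : ℂ) 1)) ∧
          ∀ z ∈ Metric.ball (0 : ℂ) 1,
            f z = ∑ k ∈ Finset.range (m + 1),
              c k z * ((starRingEnd ℂ) z / ((1 - ‖z‖ ^ 2 : ℝ) : ℂ)) ^ k := by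
  constructor
  · intro h
    obtain ⟨c, hc, hrep⟩ := NearlyHolo.reverse_dir m f hf h
    exact ⟨c, hc, fun z hz => by simpa [NearlyHolo.q] using hrep z hz⟩
  · rintro ⟨c, hc, hrep⟩
    exact NearlyHolo.forward_dir m f c hc
      (fun z hz => by simpa [NearlyHolo.q] using hrep z hz)
end
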